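/- arXiv:2306.14034 — 6 statements merged into one kernel-verified Lean document; each statement's English description precedes it below -/
import Mathlib

section
/- Let Λ be a numerical semigroup with conductor c = c(Λ) and rank k = k(Λ), and let λ be an integer with c ≤ λ < 2c. Let j be the unique index with 0 ≤ j ≤ k−1 and λ_j ≤ λ − c < λ_{j+1}. Then λ − λ_j is an order-j seed of Λ if and only if λ is not the sum of two left elements of Λ. -/
/-- A numerical semigroup: a cofinite submonoid of ℕ, viewed as a set of naturals. -/
def IsNumericalSemigroup (S : Set ℕ) : Prop :=
  0 ∈ S ∧ (∀ a ∈ S, ∀ b ∈ S, a + b ∈ S) ∧ ∃ N : ℕ, ∀ n : ℕ, N ≤ n → n ∈ S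

/-- The conductor: the smallest `N` such that every `n ≥ N` belongs to `S`. -/
noncomputable def sgConductor (S : Set ℕ) : ℕ :=
  sInf {N : ℕ | ∀ n : ℕ, N ≤ n → n ∈ S}

/-- The genus: the number of gaps. -/
noncomputable def sgGenus (S : Set ℕ) : ℕ :=
  Sᶜ.ncard

/-- The rank `k(Λ) = c(Λ) - g(Λ)`. -/
noncomputable def sgRank (S : Set ℕ) : ℕ :=
  sgConductor S - sgGenus S

/-- The multiplicity: the smallest nonzero element. -/
noncomputable def sgMultiplicity (S : Set ℕ) : ℕ :=
  sInf {n : ℕ | n ∈ S ∧ n ≠ 0}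

/-- The Frobenius number: the largest gap, i.e. the conductor minus one. -/
noncomputable def sgFrobenius (S : Set ℕ) : ℕ :=
  sgConductor S - 1

/-- `sgElem S j` is the element `λ_j` of `S = {λ_0 = 0 < λ_1 < λ_2 < ⋯}`. -/
noncomputable def sgElem (S : Set ℕ) (j : ℕ) : ℕ :=
  Nat.nth (· ∈ S) j

/-- The jump `u_j = λ_{j+1} - λ_j`. -/
noncomputable def sgJump (S : Set ℕ) (j : ℕ) : ℕ :=
  sgElem S (j + 1) - sgElem S j

/-- The left elements: elements of `S` smaller than the Frobenius number. -/
def sgLeftElements (S : Set ℕ) : Set ℕ :=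
  {x : ℕ | x ∈ S ∧ x + 1 < sgConductor S}

/-- A minimal generator: a nonzero element not the sum of two nonzero elements. -/
def IsMinimalGenerator (S : Set ℕ) (x : ℕ) : Prop :=
  x ∈ S ∧ x ≠ 0 ∧ ¬ ∃ a ∈ S, ∃ b ∈ S, a ≠ 0 ∧ b ≠ 0 ∧ a + b = x

/-- A right generator: a minimal generator larger than the Frobenius number. -/
def IsRightGenerator (S : Set ℕ) (x : ℕ) : Prop :=
  IsMinimalGenerator S x ∧ sgFrobenius S < x

/-- A strong generator: a right generator `μ` such that `μ + m(Λ)` is a minimal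
generator of `Λ ∖ {μ}`. -/
noncomputable def IsStrongGenerator (S : Set ℕ) (x : ℕ) : Prop :=
  IsRightGenerator S x ∧ IsMinimalGenerator (S \ {x}) (x + sgMultiplicity S)

/-- A new generator of `Λ`: a minimal generator of `Λ` that is not a minimal
generator of `Λ ∪ {F(Λ)}`. -/
noncomputable def IsNewGenerator (S : Set ℕ) (x : ℕ) : Prop :=
  IsMinimalGenerator S x ∧ ¬ IsMinimalGenerator (S ∪ {sgFrobenius S}) x

/-- `x` (an element `λ_s ≥ c(Λ)`) is an order-`p` seed of `Λ` if
`x + λ_p ≠ λ_i + λ_j` for all `p < i ≤ j < s`, i.e. for all `i ≤ j` with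
`p < i` and `λ_j < x`. -/
noncomputable def IsSeed (S : Set ℕ) (p x : ℕ) : Prop :=
  sgConductor S ≤ x ∧ ∀ i j : ℕ, p < i → i ≤ j → sgElem S j < x →
    x + sgElem S p ≠ sgElem S i + sgElem S j

/-- `T` is a child of `S`: obtained by removing one right generator. -/
def IsChild (T S : Set ℕ) : Prop :=
  ∃ μ : ℕ, IsRightGenerator S μ ∧ T = S \ {μ}

/-- A grandchild: a child of a child. -/
def IsGrandchild (T S : Set ℕ) : Prop :=
  ∃ C : Set ℕ, IsChild C S ∧ IsChild T C

/-- A great-grandchild: a child of a grandchild. -/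
def IsGreatGrandchild (T S : Set ℕ) : Prop :=
  ∃ C : Set ℕ, IsGrandchild C S ∧ IsChild T C

/-- `⟨a,b,c,…⟩|_κ`: the smallest numerical semigroup containing a given set. -/
def sgClosure (A : Set ℕ) : Set ℕ :=
  ⋂₀ {S : Set ℕ | IsNumericalSemigroup S ∧ A ⊆ S}



/-!
Write `x = λ - λ_j`, so that `x + λ_j = λ`. A representation `λ = λ_i + λ_{j'}` with
`j < i ≤ j'` and `λ_{j'} < x` is the same thing as a representation of `λ` as a sum of two
left elements: `λ_j ≤ λ - c < λ_{j+1}` forces both summands of such a sum to exceed `λ_j`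
and to lie below `c ≤ x`, and conversely.
-/

namespace IsNumericalSemigroup

variable {S : Set ℕ}

theorem infinite (hS : IsNumericalSemigroup S) : S.Infinite := by
  obtain ⟨-, -, N, hN⟩ := hS
  exact (Set.Ici_infinite N).mono fun n hn => hN n hn

theorem mem_of_sgConductor_le (hS : IsNumericalSemigroup S) {n : ℕ}
    (hn : sgConductor S ≤ n) : n ∈ S := by
  obtain ⟨-, -, N, hN⟩ := hS
  exact Nat.sInf_mem (s := {M | ∀ n, M ≤ n → n ∈ S}) ⟨N, hN⟩ n hn

/-- The Frobenius number `c - 1` is a gap, so an element below `c` is in fact below `c - 1`. -/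
theorem add_one_lt_sgConductor (hS : IsNumericalSemigroup S) {x : ℕ} (hx : x ∈ S)
    (hxc : x < sgConductor S) : x + 1 < sgConductor S := by
  by_contra! hle
  have hconductor : sgConductor S ≤ x := Nat.sInf_le fun n hn => by
    rcases hn.eq_or_lt with rfl | hlt
    · exact hx
    · exact hS.mem_of_sgConductor_le (by omega)
  omega

theorem mem_sgLeftElements_iff (hS : IsNumericalSemigroup S) {x : ℕ} :
    x ∈ sgLeftElements S ↔ x ∈ S ∧ x < sgConductor S :=
  ⟨fun ⟨hx, hxc⟩ => ⟨hx, by omega⟩, fun ⟨hx, hxc⟩ => ⟨hx, hS.add_one_lt_sgConductor hx hxc⟩⟩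

end IsNumericalSemigroup

section Enumeration

variable {S : Set ℕ}

theorem sgElem_mem (hS : S.Infinite) (n : ℕ) : sgElem S n ∈ S :=
  Nat.nth_mem_of_infinite hS n

theorem sgElem_lt_sgElem_iff (hS : S.Infinite) {m n : ℕ} :
    sgElem S m < sgElem S n ↔ m < n :=
  Nat.nth_lt_nth hS

theorem sgElem_le_sgElem_iff (hS : S.Infinite) {m n : ℕ} :
    sgElem S m ≤ sgElem S n ↔ m ≤ n :=
  Nat.nth_le_nth hS

theorem exists_sgElem_eq {x : ℕ} (hx : x ∈ S) : ∃ n, sgElem S n = x :=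
  let ⟨n, _, hn⟩ := Nat.exists_lt_card_nth_eq (p := (· ∈ S)) hx
  ⟨n, hn⟩

end Enumeration

theorem statement0_general (S : Set ℕ) (hS : IsNumericalSemigroup S)
    (lam j : ℕ)
    (hc : sgConductor S ≤ lam)
    (hj1 : sgElem S j ≤ lam - sgConductor S)
    (hj2 : lam - sgConductor S < sgElem S (j + 1)) :
    IsSeed S j (lam - sgElem S j) ↔
      ¬ ∃ a ∈ sgLeftElements S, ∃ b ∈ sgLeftElements S, a + b = lam := by
  have hinf := hS.infinite
  simp only [hS.mem_sgLeftElements_iff]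
  constructor
  · rintro ⟨-, hseed⟩ ⟨a, ⟨haS, hac⟩, b, ⟨hbS, hbc⟩, hab⟩
    wlog hle : a ≤ b generalizing a b
    · exact this b hbS hbc a (by omega) haS hac (by omega)
    obtain ⟨i, rfl⟩ := exists_sgElem_eq haS
    obtain ⟨k, rfl⟩ := exists_sgElem_eq hbS
    exact hseed i k ((sgElem_lt_sgElem_iff hinf).mp (by omega))
      ((sgElem_le_sgElem_iff hinf).mp hle) (by omega) (by omega)
  · intro hnot
    refine ⟨by omega, fun i k hji hik hk hsum => hnot ?_⟩
    have hj_le_i : sgElem S (j + 1) ≤ sgElem S i := (sgElem_le_sgElem_iff hinf).mpr hji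
    have hi_le_k : sgElem S i ≤ sgElem S k := (sgElem_le_sgElem_iff hinf).mpr hik
    exact ⟨_, ⟨sgElem_mem hinf i, by omega⟩, _, ⟨sgElem_mem hinf k, by omega⟩, by omega⟩

theorem statement0 (S : Set ℕ) (hS : IsNumericalSemigroup S)
    (lam j : ℕ)
    (hc : sgConductor S ≤ lam) (hc2 : lam < 2 * sgConductor S)
    (hjk : j < sgRank S)
    (hj1 : sgElem S j ≤ lam - sgConductor S)
    (hj2 : lam - sgConductor S < sgElem S (j + 1)) :
    IsSeed S j (lam - sgElem S j) ↔
      ¬ ∃ a ∈ sgLeftElements S, ∃ b ∈ sgLeftElements S, a + b = lam :=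
  statement0_general S hS lam j hc hj1 hj2
end

section
/- Let Λ ≠ ℕ be a numerical semigroup with conductor c = c(Λ) and rank k = k(Λ) ≥ 1. Then every one of the elements c, c+1, …, c + u_{k−1} − 1 is an order-(k−1) seed of Λ. -/
theorem statement2 (S : Set ℕ) (hS : IsNumericalSemigroup S)
    (hne : S ≠ Set.univ) (hk : 1 ≤ sgRank S) :
    ∀ i : ℕ, i < sgJump S (sgRank S - 1) →
      IsSeed S (sgRank S - 1) (sgConductor S + i) := by
  classical
  obtain ⟨-, -, N, hN⟩ := hS
  set c := sgConductor S with hc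
  have hcmem : ∀ n : ℕ, c ≤ n → n ∈ S :=
    Nat.sInf_mem (s := {N : ℕ | ∀ n : ℕ, N ≤ n → n ∈ S}) ⟨N, hN⟩
  have hinf : (setOf (· ∈ S)).Infinite := by
    apply Set.infinite_of_not_bddAbove
    rintro ⟨b, hb⟩
    exact absurd (hb (hcmem (max c (b+1)) (le_max_left _ _)))
      (Nat.not_le.2 (lt_of_lt_of_le (Nat.lt_succ_self b) (le_max_right c (b+1))))
  -- all gaps are < c
  have hgap : ∀ n, n ∉ S → n < c := by
    intro n hn
    by_contra h
    exact hn (hcmem n (not_lt.1 h))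
  -- genus as a finset card
  have hcompl : Sᶜ = ↑((Finset.range c).filter (fun n => n ∉ S)) := by
    ext n
    simp only [Set.mem_compl_iff, Finset.coe_filter, Finset.mem_range, Set.mem_setOf_eq]
    exact ⟨fun h => ⟨hgap n h, h⟩, fun h => h.2⟩
  have hg : sgGenus S = ((Finset.range c).filter (fun n => n ∉ S)).card := by
    rw [sgGenus, hcompl, Set.ncard_coe_finset]
  have hcount : Nat.count (· ∈ S) c = sgRank S := by
    have := Finset.card_filter_add_card_filter_not
      (s := Finset.range c) (p := fun n => n ∈ S)
    rw [Finset.card_range] at this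
    rw [Nat.count_eq_card_filter_range, sgRank, ← hc, hg]
    omega
  have hcS : c ∈ S := hcmem c le_rfl
  have hlamk : sgElem S (sgRank S) = c := by
    rw [sgElem, ← hcount, Nat.nth_count hcS]
  intro i0 hi0
  have hk1 : sgRank S - 1 + 1 = sgRank S := by omega
  -- i0 + λ_{k-1} < c
  have hkey : i0 + sgElem S (sgRank S - 1) < c := by
    rw [sgJump, hk1, hlamk] at hi0
    omega
  refine ⟨Nat.le_add_right _ _, fun i j hpi hij hjx hEq => ?_⟩
  have hi : sgRank S ≤ i := by omega
  have h1 : c ≤ sgElem S i := hlamk ▸ (Nat.nth_le_nth hinf).2 hi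
  have h2 : sgElem S i ≤ sgElem S j := (Nat.nth_le_nth hinf).2 hij
  omega
end

section
/- Let m and u be integers with 1 < u ≤ m, and let Λ = {0, m} ∪ {n ∈ ℕ : n ≥ m+u}, which is a numerical semigroup of rank 2 with conductor c = m+u. Then an integer λ with c ≤ λ < c+m is an order-0 seed of Λ if and only if λ ≠ 2m, and every integer λ with c ≤ λ < c+u is an order-1 seed of Λ. -/
/-!
Since `λ_0 = 0` and `λ_1 = m`, the seed conditions can be read off elements of `Λ` instead of
indices. Every nonzero element other than `m` is at least `m + u`, so for `λ < c + m` the only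
way to write `λ + λ_0` as a sum of two nonzero elements below `λ` is `m + m`; and for
`λ < c + u` no sum of two elements greater than `λ_1 = m` is as small as `λ + m`.
-/

open Finset

section General

variable {S : Set ℕ}

theorem sgConductor_eq_of_gap {f : ℕ} (hf : f ∉ S) (hS : ∀ n, f < n → n ∈ S) :
    sgConductor S = f + 1 := by
  have hmem : f + 1 ∈ {N : ℕ | ∀ n : ℕ, N ≤ n → n ∈ S} := hS
  refine le_antisymm (Nat.sInf_le hmem) (le_csInf ⟨_, hmem⟩ fun N hN => ?_)
  by_contra! hlt
  exact hf (hN f (by omega))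

theorem sgRank_eq_count [DecidablePred (· ∈ S)] (hS : ∀ n, sgConductor S ≤ n → n ∈ S) :
    sgRank S = Nat.count (· ∈ S) (sgConductor S) := by
  set c := sgConductor S
  have hgaps : Sᶜ = ↑({x ∈ range c | x ∉ S} : Finset ℕ) := by
    ext n
    simp only [Set.mem_compl_iff, coe_filter, mem_range, Set.mem_ofPred_eq]
    exact ⟨fun h => ⟨by_contra fun h' => h (hS n (not_lt.mp h')), h⟩, And.right⟩
  have hsplit := card_filter_add_card_filter_not (s := range c) (· ∈ S)
  rw [card_range] at hsplit
  rw [sgRank, sgGenus, hgaps, Set.ncard_coe_finset, Nat.count_eq_card_filter_range]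
  omega

theorem sgElem_count [DecidablePred (· ∈ S)] {x : ℕ} (hx : x ∈ S) :
    sgElem S (Nat.count (· ∈ S) x) = x :=
  Nat.nth_count hx

theorem isSeed_iff_of_infinite (hS : S.Infinite) (p x : ℕ) :
    IsSeed S p x ↔ sgConductor S ≤ x ∧ ∀ a ∈ S, ∀ b ∈ S, sgElem S p < a → a ≤ b → b < x →
      x + sgElem S p ≠ a + b := by
  classical
  have hmono : StrictMono (sgElem S) := Nat.nth_strictMono hS
  refine and_congr_right fun _ => ⟨fun h a ha b hb hpa hab hbx => ?_,
    fun h i j hpi hij hjx => h _ (Nat.nth_mem_of_infinite hS i) _ (Nat.nth_mem_of_infinite hS j)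
      (hmono hpi) (hmono.monotone hij) hjx⟩
  obtain ⟨i, rfl⟩ : ∃ i, sgElem S i = a := ⟨_, sgElem_count ha⟩
  obtain ⟨j, rfl⟩ : ∃ j, sgElem S j = b := ⟨_, sgElem_count hb⟩
  exact h _ _ (hmono.lt_iff_lt.mp hpa) (hmono.le_iff_le.mp hab) hbx

end General

def rankTwoSemigroup (m u : ℕ) : Set ℕ :=
  ({0, m} : Set ℕ) ∪ {n : ℕ | m + u ≤ n}

namespace rankTwoSemigroup

variable {m u : ℕ}

theorem mem_iff {n : ℕ} : n ∈ rankTwoSemigroup m u ↔ n = 0 ∨ n = m ∨ m + u ≤ n := by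
  simp only [rankTwoSemigroup, Set.mem_union, Set.mem_insert_iff, Set.mem_singleton_iff,
    Set.mem_ofPred_eq, or_assoc]

instance : DecidablePred (· ∈ rankTwoSemigroup m u) :=
  fun _ => decidable_of_iff _ mem_iff.symm

theorem isNumericalSemigroup (hum : u ≤ m) : IsNumericalSemigroup (rankTwoSemigroup m u) := by
  refine ⟨mem_iff.mpr (Or.inl rfl), fun a ha b hb => ?_, m + u, fun n hn => mem_iff.mpr (by omega)⟩
  rw [mem_iff] at ha hb ⊢
  omega

theorem infinite : (rankTwoSemigroup m u).Infinite :=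
  (Set.Ici_infinite (m + u)).mono fun _ hn => mem_iff.mpr (Or.inr (Or.inr hn))

theorem sgConductor_eq (hu : 1 < u) : sgConductor (rankTwoSemigroup m u) = m + u := by
  have := sgConductor_eq_of_gap (S := rankTwoSemigroup m u) (f := m + u - 1)
    (by rw [mem_iff]; omega) fun n hn => mem_iff.mpr (by omega)
  omega

theorem sgRank_eq (hm : 0 < m) (hu : 1 < u) : sgRank (rankTwoSemigroup m u) = 2 := by
  have hconductor := sgConductor_eq (m := m) hu
  have hleft : ({x ∈ range (m + u) | x ∈ rankTwoSemigroup m u} : Finset ℕ) = {0, m} := by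
    ext x
    simp only [mem_filter, mem_range, mem_iff, mem_insert, mem_singleton]
    omega
  rw [sgRank_eq_count fun n hn => mem_iff.mpr (Or.inr (Or.inr (hconductor ▸ hn))), hconductor,
    Nat.count_eq_card_filter_range, hleft, card_pair (by omega)]

theorem sgElem_zero : sgElem (rankTwoSemigroup m u) 0 = 0 :=
  Nat.nth_zero_of_zero (mem_iff.mpr (Or.inl rfl))

theorem sgElem_one (hm : 0 < m) (hu : 0 < u) : sgElem (rankTwoSemigroup m u) 1 = m := by
  have hcount : Nat.count (· ∈ rankTwoSemigroup m u) m = 1 := by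
    rw [Nat.count_eq_card_filter_range, card_eq_one]
    refine ⟨0, ?_⟩
    ext x
    simp only [mem_filter, mem_range, mem_iff, mem_singleton]
    omega
  rw [← hcount]
  exact sgElem_count (mem_iff.mpr (Or.inr (Or.inl rfl)))

theorem isSeed_zero_iff (hu : 1 < u) {l : ℕ} (hl : m + u ≤ l) (hl' : l < m + u + m) :
    IsSeed (rankTwoSemigroup m u) 0 l ↔ l ≠ 2 * m := by
  rw [isSeed_iff_of_infinite infinite, sgConductor_eq hu, sgElem_zero]
  constructor
  · rintro ⟨-, hseed⟩ rfl
    exact hseed m (mem_iff.mpr (Or.inr (Or.inl rfl))) m (mem_iff.mpr (Or.inr (Or.inl rfl)))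
      (by omega) le_rfl (by omega) (by omega)
  · intro hne
    refine ⟨hl, fun a ha b hb h0a hab hbl => ?_⟩
    rw [mem_iff] at ha hb
    omega

theorem isSeed_one (hu : 1 < u) (hm : 0 < m) {l : ℕ} (hl : m + u ≤ l) (hl' : l < m + u + u) :
    IsSeed (rankTwoSemigroup m u) 1 l := by
  rw [isSeed_iff_of_infinite infinite, sgConductor_eq hu, sgElem_one hm (by omega)]
  refine ⟨hl, fun a ha b hb hma hab hbl => ?_⟩
  rw [mem_iff] at ha hb
  omega

end rankTwoSemigroup

theorem statement3 (m u : ℕ) (hu : 1 < u) (hum : u ≤ m)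
    (S : Set ℕ) (hSdef : S = ({0, m} : Set ℕ) ∪ {n : ℕ | m + u ≤ n}) :
    IsNumericalSemigroup S ∧ sgRank S = 2 ∧ sgConductor S = m + u ∧
    (∀ l : ℕ, m + u ≤ l → l < m + u + m → (IsSeed S 0 l ↔ l ≠ 2 * m)) ∧
    (∀ l : ℕ, m + u ≤ l → l < m + u + u → IsSeed S 1 l) := by
  subst hSdef
  exact ⟨rankTwoSemigroup.isNumericalSemigroup hum, rankTwoSemigroup.sgRank_eq (by omega) hu,
    rankTwoSemigroup.sgConductor_eq hu,
    fun l hl hl' => rankTwoSemigroup.isSeed_zero_iff hu hl hl',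
    fun l hl hl' => rankTwoSemigroup.isSeed_one hu (by omega) hl hl'⟩
end

section
/- Let Λ = {0, m, m+u} ∪ {n ∈ ℕ : n ≥ m+u+v} be a numerical semigroup of rank 3, where 1 ≤ u ≤ m and v ≥ 2, with conductor c = m+u+v. Then: (i) if u < m, then v ≤ m−u, and for an integer i with 0 ≤ i < c the element c+i is a sum of two left elements of Λ exactly when i ∈ {m−u−v, m−v, m+u−v}; (ii) if u = m, then v ≤ m, and for an integer i with 0 ≤ i < c the element c+i is a sum of two left elements of Λ exactly when i ∈ {m−v, 2m−v}. Consequently, writing o(i) for the unique index with λ_{o(i)} ≤ i < λ_{o(i)+1}, the element c+i−λ_{o(i)} is an order-o(i) seed of Λ precisely for those i with 0 ≤ i < c not lying in the respective exceptional set. -/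
/-!
The left elements of `Λ` are `0, m, m + u`, so the only sums of two left elements that reach the
conductor are `2m`, `2m + u` and `2m + 2u`; which of them lie in `[c, 2c)` is decided by the
constraint `v ≤ m - u` (resp. `v ≤ m`), forced by `2m ∈ Λ` (resp. `3m ∈ Λ`).

The seed criterion holds for every numerical semigroup: if `λ_o ≤ i < λ_{o+1}` and
`c + i = λ_p + λ_q` with `o < p ≤ q`, then `λ_p > i` forces `λ_q < c`, so both summands are
left elements; conversely, in a decomposition of `c + i` into left elements `a ≤ b`, the bound
`b ≤ c - 2` gives `a > i ≥ λ_o`.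
-/

theorem sgConductor_eq_succ {S : Set ℕ} {F : ℕ} (hF : F ∉ S) (h : ∀ n, F < n → n ∈ S) :
    sgConductor S = F + 1 := by
  refine le_antisymm (Nat.sInf_le fun n hn => h n hn) (le_csInf ⟨F + 1, fun n hn => h n hn⟩ ?_)
  intro N hN
  by_contra hlt
  exact hF (hN F (by omega))

theorem add_one_lt_sgConductor {S : Set ℕ} {x : ℕ} (hx : x ∈ S) (hxc : x < sgConductor S) :
    x + 1 < sgConductor S := by
  by_contra hle
  have hne : {N : ℕ | ∀ n : ℕ, N ≤ n → n ∈ S}.Nonempty :=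
    Nat.nonempty_of_pos_sInf (Nat.zero_lt_of_lt hxc)
  have hmem : ∀ n, sgConductor S ≤ n → n ∈ S := Nat.sInf_mem hne
  have hx' : x ∈ {N : ℕ | ∀ n : ℕ, N ≤ n → n ∈ S} := fun n hn => by
    rcases hn.eq_or_lt with rfl | hlt
    · exact hx
    · exact hmem n (by omega)
  exact absurd (Nat.sInf_le hx') (not_le.2 hxc)

theorem mem_sgLeftElements_of_lt {S : Set ℕ} {x : ℕ} (hx : x ∈ S) (hxc : x < sgConductor S) :
    x ∈ sgLeftElements S :=
  ⟨hx, add_one_lt_sgConductor hx hxc⟩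

theorem exists_sgElem_eq_s4 {S : Set ℕ} {a : ℕ} (ha : a ∈ S) :
    ∃ p, sgElem S p = a := by
  classical
  exact ⟨Nat.count (· ∈ S) a, Nat.nth_count ha⟩

theorem isSeed_iff_not_exists_add_sgLeftElements {S : Set ℕ} (hS : S.Infinite) {o i : ℕ}
    (ho : sgElem S o ≤ i) (ho' : i < sgElem S (o + 1)) :
    IsSeed S o (sgConductor S + i - sgElem S o) ↔
      ¬ ∃ a ∈ sgLeftElements S, ∃ b ∈ sgLeftElements S, a + b = sgConductor S + i := by
  have hlt : ∀ {p q}, sgElem S p < sgElem S q ↔ p < q := Nat.nth_lt_nth hS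
  have hle : ∀ {p q}, sgElem S p ≤ sgElem S q ↔ p ≤ q := Nat.nth_le_nth hS
  refine ⟨fun ⟨_, hseed⟩ => ?_, fun hno => ⟨by omega, fun p q hop hpq _ hsum => hno ?_⟩⟩
  · rintro ⟨a, ha, b, hb, hab⟩
    wlog hba : a ≤ b generalizing a b
    · exact this b hb a ha (by omega) (by omega)
    obtain ⟨haS, -⟩ := ha
    obtain ⟨hbS, hbc⟩ := hb
    obtain ⟨p, rfl⟩ := exists_sgElem_eq_s4 haS
    obtain ⟨q, rfl⟩ := exists_sgElem_eq_s4 hbS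
    exact hseed p q (hlt.1 (by omega)) (hle.1 hba) (by omega) (by omega)
  · have hop' : sgElem S (o + 1) ≤ sgElem S p := hle.2 hop
    have hpq' : sgElem S p ≤ sgElem S q := hle.2 hpq
    have hqc : sgElem S q < sgConductor S := by omega
    exact ⟨sgElem S p, mem_sgLeftElements_of_lt (Nat.nth_mem_of_infinite hS p) (by omega),
      sgElem S q, mem_sgLeftElements_of_lt (Nat.nth_mem_of_infinite hS q) hqc, by omega⟩

def sgRankThree (m u v : ℕ) : Set ℕ :=
  ({0, m, m + u} : Set ℕ) ∪ {n : ℕ | m + u + v ≤ n}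

section RankThree

variable {m u v : ℕ}

theorem mem_sgRankThree {x : ℕ} :
    x ∈ sgRankThree m u v ↔ x = 0 ∨ x = m ∨ x = m + u ∨ m + u + v ≤ x := by
  simp only [sgRankThree, Set.mem_union, Set.mem_insert_iff, Set.mem_singleton_iff,
    Set.mem_ofPred_eq, or_assoc]

theorem sgRankThree_infinite : (sgRankThree m u v).Infinite :=
  (Set.Ici_infinite (m + u + v)).mono fun _ hn => mem_sgRankThree.2 (Or.inr (Or.inr (Or.inr hn)))

theorem sgConductor_sgRankThree (hv : 2 ≤ v) : sgConductor (sgRankThree m u v) = m + u + v := by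
  have h := sgConductor_eq_succ (S := sgRankThree m u v) (F := m + u + v - 1)
    (by rw [mem_sgRankThree]; omega) (fun n hn => mem_sgRankThree.2 (by omega))
  omega

theorem mem_sgLeftElements_sgRankThree (hv : 2 ≤ v) {x : ℕ} :
    x ∈ sgLeftElements (sgRankThree m u v) ↔ x = 0 ∨ x = m ∨ x = m + u := by
  simp only [sgLeftElements, Set.mem_ofPred_eq, sgConductor_sgRankThree hv, mem_sgRankThree]
  omega

theorem exists_add_sgLeftElements_sgRankThree_iff (hv : 2 ≤ v) {n : ℕ} (hn : m + u < n) :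
    (∃ a ∈ sgLeftElements (sgRankThree m u v), ∃ b ∈ sgLeftElements (sgRankThree m u v),
        a + b = n) ↔
      n = m + m ∨ n = m + (m + u) ∨ n = (m + u) + (m + u) := by
  simp only [mem_sgLeftElements_sgRankThree hv]
  constructor
  · rintro ⟨a, ha, b, hb, rfl⟩
    omega
  · rintro (rfl | rfl | rfl)
    · exact ⟨m, by simp, m, by simp, rfl⟩
    · exact ⟨m, by simp, m + u, by simp, rfl⟩
    · exact ⟨m + u, by simp, m + u, by simp, rfl⟩

end RankThree

theorem statement4_general (m u v : ℕ) (hu1 : 1 ≤ u) (hv : 2 ≤ v)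
    (S : Set ℕ) (hSdef : S = ({0, m, m + u} : Set ℕ) ∪ {n : ℕ | m + u + v ≤ n})
    (hS : IsNumericalSemigroup S) :
    (u < m →
      v ≤ m - u ∧
      (∀ i : ℕ, i < m + u + v →
        ((∃ a ∈ sgLeftElements S, ∃ b ∈ sgLeftElements S, a + b = m + u + v + i) ↔
          (i = m - u - v ∨ i = m - v ∨ i = m + u - v))) ∧
      (∀ i : ℕ, i < m + u + v → ∀ o : ℕ, sgElem S o ≤ i → i < sgElem S (o + 1) →
        (IsSeed S o (m + u + v + i - sgElem S o) ↔
          ¬ (i = m - u - v ∨ i = m - v ∨ i = m + u - v)))) ∧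
    (u = m →
      v ≤ m ∧
      (∀ i : ℕ, i < m + u + v →
        ((∃ a ∈ sgLeftElements S, ∃ b ∈ sgLeftElements S, a + b = m + u + v + i) ↔
          (i = m - v ∨ i = 2 * m - v))) ∧
      (∀ i : ℕ, i < m + u + v → ∀ o : ℕ, sgElem S o ≤ i → i < sgElem S (o + 1) →
        (IsSeed S o (m + u + v + i - sgElem S o) ↔
          ¬ (i = m - v ∨ i = 2 * m - v)))) := by
  obtain rfl : S = sgRankThree m u v := hSdef
  have hsum (i : ℕ) :=
    exists_add_sgLeftElements_sgRankThree_iff (m := m) (u := u) hv (n := m + u + v + i) (by omega)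
  have hseed (i o : ℕ) (ho : sgElem (sgRankThree m u v) o ≤ i)
      (ho' : i < sgElem (sgRankThree m u v) (o + 1)) :=
    sgConductor_sgRankThree hv ▸
      isSeed_iff_not_exists_add_sgLeftElements sgRankThree_infinite ho ho'
  have hmm := mem_sgRankThree.1 (hS.2.1 m (by simp [sgRankThree]) m (by simp [sgRankThree]))
  have hmmu := mem_sgRankThree.1 (hS.2.1 m (by simp [sgRankThree]) (m + u) (by simp [sgRankThree]))
  refine ⟨fun hlt => ⟨by omega, fun i _ => ?_, fun i _ o ho ho' => ?_⟩,
    fun heq => ⟨by omega, fun i _ => ?_, fun i _ o ho ho' => ?_⟩⟩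
  · rw [hsum]; omega
  · rw [hseed i o ho ho', hsum]; omega
  · rw [hsum]; omega
  · rw [hseed i o ho ho', hsum]; omega

theorem statement4 (m u v : ℕ) (hu1 : 1 ≤ u) (hum : u ≤ m) (hv : 2 ≤ v)
    (S : Set ℕ) (hSdef : S = ({0, m, m + u} : Set ℕ) ∪ {n : ℕ | m + u + v ≤ n})
    (hS : IsNumericalSemigroup S) :
    (u < m →
      v ≤ m - u ∧
      (∀ i : ℕ, i < m + u + v →
        ((∃ a ∈ sgLeftElements S, ∃ b ∈ sgLeftElements S, a + b = m + u + v + i) ↔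
          (i = m - u - v ∨ i = m - v ∨ i = m + u - v))) ∧
      (∀ i : ℕ, i < m + u + v → ∀ o : ℕ, sgElem S o ≤ i → i < sgElem S (o + 1) →
        (IsSeed S o (m + u + v + i - sgElem S o) ↔
          ¬ (i = m - u - v ∨ i = m - v ∨ i = m + u - v)))) ∧
    (u = m →
      v ≤ m ∧
      (∀ i : ℕ, i < m + u + v →
        ((∃ a ∈ sgLeftElements S, ∃ b ∈ sgLeftElements S, a + b = m + u + v + i) ↔
          (i = m - v ∨ i = 2 * m - v))) ∧
      (∀ i : ℕ, i < m + u + v → ∀ o : ℕ, sgElem S o ≤ i → i < sgElem S (o + 1) →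
        (IsSeed S o (m + u + v + i - sgElem S o) ↔
          ¬ (i = m - v ∨ i = 2 * m - v)))) :=
  statement4_general m u v hu1 hv S hSdef hS
end

section
/- Let Λ be a numerical semigroup of rank k = k(Λ) ≥ 2 with conductor c = c(Λ), and let λ_s (with s ≥ k, so λ_s ≥ c) be a minimal generator of Λ; set Λ̃ = Λ∖{λ_s}, a numerical semigroup with conductor λ_s + 1 and rank s. Then for every p with 0 ≤ p < k−1, the set of order-p seeds of Λ̃ equals the set of order-p seeds λ_t of Λ with λ_t > λ_s, together with the additional element λ_s + u_p exactly when λ_s is an order-(p+1) seed of Λ. -/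
set_option linter.unusedSectionVars false

open scoped Classical

noncomputable def nsCount (S : Set ℕ) (n : ℕ) : ℕ := Nat.count (· ∈ S) n

lemma nsCount_def (S : Set ℕ) (n : ℕ) :
    nsCount S n = ((Finset.range n).filter (fun x => x ∈ S)).card := by
  rw [nsCount, Nat.count_eq_card_filter_range]

lemma nsCount_succ (S : Set ℕ) (n : ℕ) (hn : n ∈ S) :
    nsCount S (n + 1) = nsCount S n + 1 := by
  rw [nsCount, nsCount, Nat.count_succ, if_pos hn]

lemma ns_inf {S : Set ℕ} (hS : IsNumericalSemigroup S) : S.Infinite := by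
  obtain ⟨-, -, N, hN⟩ := hS
  exact (Set.Ici_infinite N).mono (fun n hn => hN n hn)

lemma ns_cond_mem {S : Set ℕ} (hS : IsNumericalSemigroup S) :
    ∀ n, sgConductor S ≤ n → n ∈ S := by
  obtain ⟨-, -, N, hN⟩ := hS
  exact Nat.sInf_mem (⟨N, hN⟩ : {N : ℕ | ∀ n, N ≤ n → n ∈ S}.Nonempty)

lemma ns_cond_le {S : Set ℕ} {N : ℕ} (h : ∀ n, N ≤ n → n ∈ S) : sgConductor S ≤ N :=
  Nat.sInf_le h

lemma ns_gap_lt {S : Set ℕ} (hS : IsNumericalSemigroup S) {x : ℕ} (hx : x ∉ S) :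
    x < sgConductor S := by
  by_contra h
  exact hx (ns_cond_mem hS x (le_of_not_gt h))

lemma ns_gaps_eq {S : Set ℕ} (hS : IsNumericalSemigroup S) :
    Sᶜ = ↑((Finset.range (sgConductor S)).filter (fun x => x ∉ S)) := by
  ext x
  simp only [Set.mem_compl_iff, Finset.coe_filter, Finset.mem_range, Set.mem_setOf_eq]
  exact ⟨fun h => ⟨ns_gap_lt hS h, h⟩, fun h => h.2⟩

lemma ns_count_add_genus {S : Set ℕ} (hS : IsNumericalSemigroup S) :
    nsCount S (sgConductor S) + sgGenus S = sgConductor S := by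
  rw [nsCount_def, sgGenus, ns_gaps_eq hS, Set.ncard_coe_finset]
  rw [Finset.card_filter_add_card_filter_not (fun x => x ∈ S), Finset.card_range]

lemma ns_genus_le {S : Set ℕ} (hS : IsNumericalSemigroup S) :
    sgGenus S ≤ sgConductor S := by
  have := ns_count_add_genus hS; omega

lemma ns_cond_eq {S : Set ℕ} (hS : IsNumericalSemigroup S) :
    sgConductor S = sgRank S + sgGenus S := by
  have h1 := ns_genus_le hS; rw [sgRank]; omega

lemma ns_count_cond {S : Set ℕ} (hS : IsNumericalSemigroup S) :
    nsCount S (sgConductor S) = sgRank S := by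
  have h1 := ns_count_add_genus hS; have h2 := ns_cond_eq hS; omega

lemma ns_count_of_cond_le {S : Set ℕ} (hS : IsNumericalSemigroup S) {n : ℕ}
    (hn : sgConductor S ≤ n) : nsCount S n = sgRank S + (n - sgConductor S) := by
  obtain ⟨d, rfl⟩ := Nat.exists_eq_add_of_le hn
  induction d with
  | zero => simpa using ns_count_cond hS
  | succ d ih =>
    have : sgConductor S + d ∈ S := ns_cond_mem hS _ (by omega)
    rw [← Nat.add_assoc, nsCount_succ S _ this, ih (by omega)]
    omega

lemma ns_elem_mem {S : Set ℕ} (hS : IsNumericalSemigroup S) (j : ℕ) : sgElem S j ∈ S :=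
  Nat.nth_mem_of_infinite (ns_inf hS) j

lemma ns_elem_lt {S : Set ℕ} (hS : IsNumericalSemigroup S) {i j : ℕ} :
    sgElem S i < sgElem S j ↔ i < j := Nat.nth_lt_nth (ns_inf hS)

lemma ns_elem_le {S : Set ℕ} (hS : IsNumericalSemigroup S) {i j : ℕ} :
    sgElem S i ≤ sgElem S j ↔ i ≤ j := Nat.nth_le_nth (ns_inf hS)

lemma ns_count_elem {S : Set ℕ} (hS : IsNumericalSemigroup S) (j : ℕ) :
    nsCount S (sgElem S j) = j := by
  unfold nsCount; exact Nat.count_nth_of_infinite (p := (· ∈ S)) (ns_inf hS) j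

lemma ns_elem_count {S : Set ℕ} {x : ℕ} (hx : x ∈ S) :
    sgElem S (nsCount S x) = x := by
  unfold nsCount; exact Nat.nth_count hx

lemma ns_elem_of_rank_le {S : Set ℕ} (hS : IsNumericalSemigroup S) {j : ℕ}
    (hj : sgRank S ≤ j) : sgElem S j = sgConductor S + (j - sgRank S) := by
  have hm : sgConductor S + (j - sgRank S) ∈ S := ns_cond_mem hS _ (by omega)
  have := ns_elem_count hm
  rwa [ns_count_of_cond_le hS (by omega), Nat.add_sub_cancel_left,
    Nat.add_sub_cancel' hj] at this

lemma ns_cond_le_elem {S : Set ℕ} (hS : IsNumericalSemigroup S) {j : ℕ}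
    (hj : sgRank S ≤ j) : sgConductor S ≤ sgElem S j := by
  rw [ns_elem_of_rank_le hS hj]; omega

lemma ns_between {S : Set ℕ} (hS : IsNumericalSemigroup S) {p x : ℕ} (hx : x ∈ S)
    (h : sgElem S p < x) : sgElem S (p + 1) ≤ x := by
  have := ns_elem_count hx
  rw [← this] at h ⊢
  rw [ns_elem_lt hS] at h
  exact (ns_elem_le hS).2 h

section T
variable {S : Set ℕ} (hS : IsNumericalSemigroup S) {s : ℕ} (hs : sgRank S ≤ s)
  (hgen : IsMinimalGenerator S (sgElem S s))
include hS hs hgen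

lemma ns_T_sg : IsNumericalSemigroup (S \ {sgElem S s}) := by
  have h0 := hS.1
  have hadd := hS.2.1
  refine ⟨⟨h0, by simpa using (hgen.2.1).symm⟩, ?_, sgElem S s + 1, ?_⟩
  · rintro a ⟨haS, ha⟩ b ⟨hbS, hb⟩
    refine ⟨hadd a haS b hbS, ?_⟩
    simp only [Set.mem_singleton_iff] at ha hb ⊢
    intro habs
    rcases Nat.eq_zero_or_pos a with rfl | ha0
    · exact hb (by simpa using habs)
    rcases Nat.eq_zero_or_pos b with rfl | hb0
    · exact ha (by simpa using habs)
    exact hgen.2.2 ⟨a, haS, b, hbS, by omega, by omega, habs⟩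
  · intro n hn
    have hca : sgConductor S ≤ sgElem S s := ns_cond_le_elem hS hs
    exact ⟨ns_cond_mem hS n (by omega), by simp; omega⟩

lemma ns_countT_le {m : ℕ} (hm : m ≤ sgElem S s) :
    nsCount (S \ {sgElem S s}) m = nsCount S m := by
  rw [nsCount_def, nsCount_def]
  congr 1
  ext x
  simp only [Finset.mem_filter, Finset.mem_range, Set.mem_diff, Set.mem_singleton_iff]
  constructor
  · exact fun h => ⟨h.1, h.2.1⟩
  · exact fun h => ⟨h.1, h.2, by omega⟩

lemma ns_countT_gt {m : ℕ} (hm : sgElem S s < m) :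
    nsCount (S \ {sgElem S s}) m + 1 = nsCount S m := by
  rw [nsCount_def, nsCount_def]
  have key : ∀ t u : Finset ℕ, sgElem S s ∈ u → t = u.erase (sgElem S s) →
      t.card + 1 = u.card := by
    intro t u hu ht
    have hpos : 0 < u.card := Finset.card_pos.2 ⟨_, hu⟩
    rw [ht, Finset.card_erase_of_mem hu]
    omega
  apply key
  · simp only [Finset.mem_filter, Finset.mem_range]
    exact ⟨hm, ns_elem_mem hS s⟩
  · ext x
    simp only [Finset.mem_filter, Finset.mem_erase, Finset.mem_range, Set.mem_diff,
      Set.mem_singleton_iff]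
    tauto

lemma ns_elemT_lt {j : ℕ} (hj : j < s) :
    sgElem (S \ {sgElem S s}) j = sgElem S j := by
  have hlt : sgElem S j < sgElem S s := (ns_elem_lt hS).2 hj
  have hmem : sgElem S j ∈ S \ {sgElem S s} := ⟨ns_elem_mem hS j, by simp; omega⟩
  have h1 := ns_elem_count hmem
  rwa [ns_countT_le hS hs hgen (le_of_lt hlt), ns_count_elem hS j] at h1

lemma ns_elemT_ge {j : ℕ} (hj : s ≤ j) :
    sgElem (S \ {sgElem S s}) j = sgElem S (j + 1) := by
  have hlt : sgElem S s < sgElem S (j + 1) := (ns_elem_lt hS).2 (by omega)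
  have hmem : sgElem S (j + 1) ∈ S \ {sgElem S s} := ⟨ns_elem_mem hS _, by simp; omega⟩
  have h1 := ns_elem_count hmem
  have h2 := ns_countT_gt hS hs hgen hlt
  rw [ns_count_elem hS (j + 1)] at h2
  have : nsCount (S \ {sgElem S s}) (sgElem S (j + 1)) = j := by omega
  rwa [this] at h1

lemma ns_condT : sgConductor (S \ {sgElem S s}) = sgElem S s + 1 := by
  have hca : sgConductor S ≤ sgElem S s := ns_cond_le_elem hS hs
  apply le_antisymm
  · exact ns_cond_le (fun n hn => ⟨ns_cond_mem hS n (by omega), by simp; omega⟩)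
  · by_contra h
    have hmem := ns_cond_mem (ns_T_sg hS hs hgen) (sgElem S s) (by omega)
    exact hmem.2 rfl

lemma ns_genusT : sgGenus (S \ {sgElem S s}) = sgGenus S + 1 := by
  have hfin : Sᶜ.Finite := by
    rw [ns_gaps_eq hS]; exact Finset.finite_toSet _
  have hTc : (S \ {sgElem S s})ᶜ = insert (sgElem S s) Sᶜ := by
    ext x
    simp only [Set.mem_compl_iff, Set.mem_diff, Set.mem_singleton_iff, Set.mem_insert_iff]
    tauto
  rw [sgGenus, hTc, Set.ncard_insert_of_notMem (by simp [ns_elem_mem hS s]) hfin, sgGenus]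

lemma ns_rankT : sgRank (S \ {sgElem S s}) = s := by
  have h1 := ns_condT hS hs hgen
  have h2 := ns_genusT hS hs hgen
  have h3 := ns_elem_of_rank_le hS hs
  have h4 := ns_cond_eq hS
  rw [sgRank, h1, h2]
  omega

end T

lemma ns_seed_iff {S : Set ℕ} (hS : IsNumericalSemigroup S)
    {s : ℕ} (hs : sgRank S ≤ s) (hgen : IsMinimalGenerator S (sgElem S s))
    {p : ℕ} (hp : p + 1 < sgRank S) (y : ℕ) :
    IsSeed (S \ {sgElem S s}) p y ↔
      ((IsSeed S p y ∧ sgElem S s < y) ∨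
       (IsSeed S (p + 1) (sgElem S s) ∧ y = sgElem S s + sgJump S p)) := by
  have hTsg := ns_T_sg hS hs hgen
  have hcondT := ns_condT hS hs hgen
  have hca : sgConductor S ≤ sgElem S s := ns_cond_le_elem hS hs
  have hps : p + 1 < s := by omega
  have hTp : sgElem (S \ {sgElem S s}) p = sgElem S p := ns_elemT_lt hS hs hgen (by omega)
  have hTp1 : sgElem (S \ {sgElem S s}) (p + 1) = sgElem S (p + 1) := ns_elemT_lt hS hs hgen hps
  have hup : sgElem S p < sgElem S (p + 1) := (ns_elem_lt hS).2 (by omega)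
  have hp1a : sgElem S (p + 1) < sgElem S s := (ns_elem_lt hS).2 hps
  have hjump : sgElem S s + sgJump S p + sgElem S p = sgElem S s + sgElem S (p + 1) := by
    rw [sgJump]; omega
  constructor
  · rintro ⟨hcy, hmain⟩
    rw [hcondT] at hcy
    have hcontra1 : ∀ i j : ℕ, p < i → i ≤ j → i ≠ s → j ≠ s → sgElem S j < y →
        y + sgElem S p ≠ sgElem S i + sgElem S j := by
      intro i j hpi hij his hjs hjy heq
      rcases Nat.lt_or_ge i s with hi | hi
      · rcases Nat.lt_or_ge j s with hj | hj
        · exact hmain i j hpi hij (by rw [ns_elemT_lt hS hs hgen hj]; exact hjy)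
            (by rw [hTp, ns_elemT_lt hS hs hgen hi, ns_elemT_lt hS hs hgen hj]; exact heq)
        · exact hmain i (j - 1) hpi (by omega)
            (by rw [ns_elemT_ge hS hs hgen (by omega : s ≤ j - 1),
                  show j - 1 + 1 = j by omega]; exact hjy)
            (by rw [hTp, ns_elemT_lt hS hs hgen hi,
                  ns_elemT_ge hS hs hgen (by omega : s ≤ j - 1),
                  show j - 1 + 1 = j by omega]; exact heq)
      · exact hmain (i - 1) (j - 1) (by omega) (by omega)
          (by rw [ns_elemT_ge hS hs hgen (by omega : s ≤ j - 1),
                show j - 1 + 1 = j by omega]; exact hjy)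
          (by rw [hTp, ns_elemT_ge hS hs hgen (by omega : s ≤ i - 1),
                ns_elemT_ge hS hs hgen (by omega : s ≤ j - 1),
                show i - 1 + 1 = i by omega, show j - 1 + 1 = j by omega]; exact heq)
    have hcontra2 : ∀ w, w ∈ S → sgElem S (p + 1) < w →
        y + sgElem S p = sgElem S s + w → False := by
      intro w hw hpw heq
      set z := sgElem S s + w - sgElem S (p + 1) with hz
      have hzgt : sgElem S s < z := by omega
      have hzS : z ∈ S := ns_cond_mem hS z (by omega)
      have hzT : z ∈ S \ {sgElem S s} := ⟨hzS, by simp; omega⟩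
      have hq := ns_elem_count hzT
      set q := nsCount (S \ {sgElem S s}) z with hqdef
      have hq1 : p + 1 < q := by
        have h2 : sgElem (S \ {sgElem S s}) (p + 1) < sgElem (S \ {sgElem S s}) q := by
          rw [hTp1, hq]; omega
        exact (ns_elem_lt hTsg).1 h2
      have hzy : z < y := by omega
      exact hmain (p + 1) q (by omega) (by omega) (by rw [hq]; exact hzy)
        (by rw [hTp, hTp1, hq]; omega)
    by_cases hSy : ∀ i j : ℕ, p < i → i ≤ j → sgElem S j < y →
        y + sgElem S p ≠ sgElem S i + sgElem S j
    · exact Or.inl ⟨⟨by omega, hSy⟩, by omega⟩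
    · push_neg at hSy
      obtain ⟨i, j, hpi, hij, hjy, heq⟩ := hSy
      by_cases hjs : j = s
      · rw [hjs] at heq hjy
        by_cases hipp : i = p + 1
        · rw [hipp] at heq
          right
          refine ⟨⟨hca, ?_⟩, by rw [sgJump]; omega⟩
          intro i' j' hpi' hij' hj's heq'
          have hj'lt : j' < s := (ns_elem_lt hS).1 hj's
          exact hmain i' j' (by omega) hij'
            (by rw [ns_elemT_lt hS hs hgen hj'lt]; omega)
            (by rw [hTp, ns_elemT_lt hS hs hgen (by omega : i' < s),
                  ns_elemT_lt hS hs hgen hj'lt]; omega)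
        · have hiw : sgElem S (p + 1) < sgElem S i := (ns_elem_lt hS).2 (by omega)
          exact (hcontra2 (sgElem S i) (ns_elem_mem hS i) hiw (by omega)).elim
      · by_cases his : i = s
        · rw [his] at heq
          have hjw : sgElem S (p + 1) < sgElem S j := (ns_elem_lt hS).2 (by omega)
          exact (hcontra2 (sgElem S j) (ns_elem_mem hS j) hjw (by omega)).elim
        · exact (hcontra1 i j hpi hij his hjs hjy heq).elim
  · rintro (⟨⟨hcy, hSy⟩, hay⟩ | ⟨⟨-, hsa⟩, rfl⟩)
    · refine ⟨by rw [hcondT]; omega, ?_⟩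
      intro i j hpi hij hjy heq
      rcases Nat.lt_or_ge j s with hj | hj
      · have hi : i < s := by omega
        rw [hTp, ns_elemT_lt hS hs hgen hi, ns_elemT_lt hS hs hgen hj] at heq
        rw [ns_elemT_lt hS hs hgen hj] at hjy
        exact hSy i j hpi hij hjy heq
      · rcases Nat.lt_or_ge i s with hi | hi
        · rw [hTp, ns_elemT_lt hS hs hgen hi, ns_elemT_ge hS hs hgen hj] at heq
          rw [ns_elemT_ge hS hs hgen hj] at hjy
          exact hSy i (j + 1) hpi (by omega) hjy heq
        · rw [hTp, ns_elemT_ge hS hs hgen hi, ns_elemT_ge hS hs hgen hj] at heq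
          rw [ns_elemT_ge hS hs hgen hj] at hjy
          exact hSy (i + 1) (j + 1) (by omega) (by omega) hjy heq
    · refine ⟨by rw [hcondT, sgJump]; omega, ?_⟩
      intro i j hpi hij hjy heq
      rw [hTp] at heq
      have heq2 : sgElem S s + sgElem S (p + 1) =
          sgElem (S \ {sgElem S s}) i + sgElem (S \ {sgElem S s}) j := by omega
      rcases Nat.lt_or_ge j s with hj | hj
      · have hi : i < s := by omega
        rw [ns_elemT_lt hS hs hgen hi, ns_elemT_lt hS hs hgen hj] at heq2
        have hjlt : sgElem S j < sgElem S s := (ns_elem_lt hS).2 hj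
        by_cases hip : p + 1 < i
        · exact hsa i j hip hij hjlt heq2
        · have hie : i = p + 1 := by omega
          subst hie
          omega
      · have hbgt : sgElem S s < sgElem (S \ {sgElem S s}) j := by
          rw [ns_elemT_ge hS hs hgen hj]
          exact (ns_elem_lt hS).2 (by omega)
        have haS : sgElem (S \ {sgElem S s}) i ∈ S := (ns_elem_mem hTsg i).1
        have h1 : sgElem S p < sgElem (S \ {sgElem S s}) i := by
          have hjv : sgJump S p = sgElem S (p + 1) - sgElem S p := rfl
          omega
        have h2 := ns_between hS haS h1
        have hjv : sgJump S p = sgElem S (p + 1) - sgElem S p := rfl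
        omega


theorem statement5 (S : Set ℕ) (hS : IsNumericalSemigroup S)
    (hk : 2 ≤ sgRank S) (s : ℕ) (hs : sgRank S ≤ s)
    (hgen : IsMinimalGenerator S (sgElem S s)) :
    IsNumericalSemigroup (S \ {sgElem S s}) ∧
    sgConductor (S \ {sgElem S s}) = sgElem S s + 1 ∧
    sgRank (S \ {sgElem S s}) = s ∧
    (∀ p : ℕ, p + 1 < sgRank S → ∀ y : ℕ,
      (IsSeed (S \ {sgElem S s}) p y ↔
        ((IsSeed S p y ∧ sgElem S s < y) ∨
         (IsSeed S (p + 1) (sgElem S s) ∧ y = sgElem S s + sgJump S p)))) := by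
  exact ⟨ns_T_sg hS hs hgen, ns_condT hS hs hgen, ns_rankT hS hs hgen,
    fun p hp y => ns_seed_iff hS hs hgen hp y⟩
end

section
/- For every integer m ≥ 2, the nontrivial ordinary numerical semigroup Λ = {0} ∪ {n ∈ ℕ : n ≥ m} has exactly m(m−1)/2 + 3 grandchildren. -/
/-! A nonzero element of `Λ = {0} ∪ [m, ∞)` is a sum of two nonzero elements exactly when it is
at least `2m`, so the right generators of `Λ` are `m, …, 2m - 1`. Removing one of them, `μ`, leaves
the right generators `μ' ∈ (μ, 2m)`, together with `2m` if `μ = m` and `2m + 1` if `μ ≤ m + 1`,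
since only then are the decompositions `m + m`, resp. `m + (m + 1)`, lost. Hence the grandchildren
are the `Λ ∖ s` for the `C(m, 2)` two-element subsets `s` of `[m, 2m)` and for
`s = {m, 2m}, {m, 2m + 1}, {m + 1, 2m + 1}`, and distinct `s` give distinct grandchildren. -/

def ordinarySemigroup (m : ℕ) : Set ℕ := {0} ∪ {n | m ≤ n}

lemma mem_ordinarySemigroup {m x : ℕ} : x ∈ ordinarySemigroup m ↔ x = 0 ∨ m ≤ x := Iff.rfl

lemma sgFrobenius_eq {S : Set ℕ} {f : ℕ} (hf : f ∉ S) (hS : ∀ n, f < n → n ∈ S) :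
    sgFrobenius S = f := by
  have hc : sgConductor S = f + 1 := by
    refine le_antisymm (Nat.sInf_le fun n hn => hS n hn) (le_csInf ⟨f + 1, fun n hn => hS n hn⟩ ?_)
    intro N hN
    by_contra! hlt
    exact hf (hN f (by omega))
  simp [sgFrobenius, hc]

lemma isRightGenerator_iff {S : Set ℕ} {f x : ℕ} (hf : f ∉ S) (hS : ∀ n, f < n → n ∈ S) :
    IsRightGenerator S x ↔ f < x ∧ ¬∃ a ∈ S, ∃ b ∈ S, a ≠ 0 ∧ b ≠ 0 ∧ a + b = x := by
  rw [IsRightGenerator, IsMinimalGenerator, sgFrobenius_eq hf hS]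
  constructor
  · rintro ⟨⟨-, -, hx⟩, hfx⟩
    exact ⟨hfx, hx⟩
  · rintro ⟨hfx, hx⟩
    exact ⟨⟨hS x hfx, by omega, hx⟩, hfx⟩

lemma isRightGenerator_ordinarySemigroup_iff {m x : ℕ} (hm : 2 ≤ m) :
    IsRightGenerator (ordinarySemigroup m) x ↔ m ≤ x ∧ x < 2 * m := by
  rw [isRightGenerator_iff (S := ordinarySemigroup m) (f := m - 1)
    (by rw [mem_ordinarySemigroup]; omega) (fun n hn => mem_ordinarySemigroup.2 (Or.inr (by omega)))]
  simp only [mem_ordinarySemigroup]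
  constructor
  · rintro ⟨hx, hsum⟩
    refine ⟨by omega, ?_⟩
    by_contra! h
    exact hsum ⟨m, by omega, x - m, by omega, by omega, by omega, by omega⟩
  · rintro ⟨h1, h2⟩
    refine ⟨by omega, ?_⟩
    rintro ⟨a, ha, b, hb, ha0, hb0, hab⟩
    omega

lemma isRightGenerator_ordinarySemigroup_diff_iff {m μ x : ℕ} (hm : 1 ≤ m) (hμ : m ≤ μ) :
    IsRightGenerator (ordinarySemigroup m \ {μ}) x ↔
      μ < x ∧ (x < 2 * m ∨ x = 2 * m ∧ μ = m ∨ x = 2 * m + 1 ∧ μ ≤ m + 1) := by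
  rw [isRightGenerator_iff (S := ordinarySemigroup m \ {μ}) (f := μ) (fun h => h.2 rfl)
    (fun n hn => ⟨mem_ordinarySemigroup.2 (Or.inr (by omega)), by rintro rfl; omega⟩)]
  simp only [Set.mem_sdiff, mem_ordinarySemigroup, Set.mem_singleton_iff]
  constructor
  · rintro ⟨hx, hsum⟩
    refine ⟨hx, ?_⟩
    by_contra! h
    by_cases hμx : μ = m ∨ x = m + μ
    · exact hsum ⟨m + 1, ⟨by omega, by omega⟩, x - (m + 1), ⟨by omega, by omega⟩, by omega, by omega,
        by omega⟩
    · exact hsum ⟨m, ⟨by omega, by omega⟩, x - m, ⟨by omega, by omega⟩, by omega, by omega, by omega⟩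
  · rintro ⟨hx, hcases⟩
    refine ⟨hx, ?_⟩
    rintro ⟨a, ⟨ha, ha'⟩, b, ⟨hb, hb'⟩, ha0, hb0, hab⟩
    omega

lemma isGrandchild_ordinarySemigroup_iff {m : ℕ} (hm : 2 ≤ m) (T : Set ℕ) :
    IsGrandchild T (ordinarySemigroup m) ↔ ∃ a b, m ≤ a ∧ a < b ∧
      (b < 2 * m ∨ b = 2 * m ∧ a = m ∨ b = 2 * m + 1 ∧ a ≤ m + 1) ∧
      T = ordinarySemigroup m \ {a, b} := by
  simp only [IsGrandchild, IsChild, isRightGenerator_ordinarySemigroup_iff hm]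
  constructor
  · rintro ⟨C, ⟨a, ha, rfl⟩, ⟨b, hb, rfl⟩⟩
    rw [isRightGenerator_ordinarySemigroup_diff_iff (by omega) ha.1] at hb
    exact ⟨a, b, ha.1, hb.1, hb.2, by rw [Set.sdiff_sdiff, Set.singleton_union]⟩
  · rintro ⟨a, b, ha, hab, hb, rfl⟩
    refine ⟨_, ⟨a, ⟨ha, by omega⟩, rfl⟩, b, ?_, by rw [Set.sdiff_sdiff, Set.singleton_union]⟩
    rw [isRightGenerator_ordinarySemigroup_diff_iff (by omega) ha]
    exact ⟨hab, hb⟩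

def grandchildGaps (m : ℕ) : Finset (Finset ℕ) :=
  (Finset.Ico m (2 * m)).powersetCard 2 ∪ {{m, 2 * m}, {m, 2 * m + 1}, {m + 1, 2 * m + 1}}

lemma mem_grandchildGaps {m : ℕ} {s : Finset ℕ} (hm : 0 < m) :
    s ∈ grandchildGaps m ↔ ∃ a b, m ≤ a ∧ a < b ∧
      (b < 2 * m ∨ b = 2 * m ∧ a = m ∨ b = 2 * m + 1 ∧ a ≤ m + 1) ∧ s = {a, b} := by
  simp only [grandchildGaps, Finset.mem_union, Finset.mem_powersetCard, Finset.card_eq_two,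
    Finset.mem_insert, Finset.mem_singleton]
  constructor
  · rintro (⟨hsub, x, y, hxy, rfl⟩ | rfl | rfl | rfl)
    · have hx := Finset.mem_Ico.1 (hsub (Finset.mem_insert_self x {y}))
      have hy := Finset.mem_Ico.1 (hsub (Finset.mem_insert_of_mem (Finset.mem_singleton_self y)))
      rcases hxy.lt_or_gt with h | h
      · exact ⟨x, y, hx.1, h, Or.inl hy.2, rfl⟩
      · exact ⟨y, x, hy.1, h, Or.inl hx.2, Finset.pair_comm x y⟩
    · exact ⟨m, 2 * m, le_rfl, by omega, by omega, rfl⟩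
    · exact ⟨m, 2 * m + 1, le_rfl, by omega, by omega, rfl⟩
    · exact ⟨m + 1, 2 * m + 1, by omega, by omega, by omega, rfl⟩
  · rintro ⟨a, b, ha, hab, hb | ⟨rfl, rfl⟩ | ⟨rfl, hb⟩, rfl⟩
    · refine Or.inl ⟨fun x hx => ?_, a, b, hab.ne, rfl⟩
      rw [Finset.mem_insert, Finset.mem_singleton] at hx
      rw [Finset.mem_Ico]
      omega
    · simp
    · obtain rfl | rfl : a = m ∨ a = m + 1 := by omega
      all_goals simp

lemma le_of_mem_grandchildGaps {m : ℕ} {s : Finset ℕ} (hm : 0 < m) (hs : s ∈ grandchildGaps m) :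
    ∀ x ∈ s, m ≤ x := by
  obtain ⟨a, b, ha, hab, -, rfl⟩ := (mem_grandchildGaps hm).1 hs
  simp only [Finset.mem_insert, Finset.mem_singleton]
  omega

lemma card_grandchildGaps {m : ℕ} (hm : 2 ≤ m) :
    (grandchildGaps m).card = m * (m - 1) / 2 + 3 := by
  have hne : ∀ {s t : Finset ℕ} (x : ℕ), x ∈ s → x ∉ t → s ≠ t := fun x hs ht h => ht (h ▸ hs)
  have hpair : ∀ {x y z : ℕ}, x ≠ y → x ≠ z → x ∉ ({y, z} : Finset ℕ) := by
    simp only [Finset.mem_insert, Finset.mem_singleton, not_or]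
    exact fun h h' => ⟨h, h'⟩
  rw [grandchildGaps, Finset.card_union_of_disjoint, Finset.card_powersetCard, Nat.card_Ico,
    show 2 * m - m = m by omega, Nat.choose_two_right, Finset.card_insert_of_notMem,
    Finset.card_pair]
  · exact hne m (by simp) (hpair (by omega) (by omega))
  · simp only [Finset.mem_insert, Finset.mem_singleton, not_or]
    exact ⟨hne (2 * m) (by simp) (hpair (by omega) (by omega)),
      hne (2 * m) (by simp) (hpair (by omega) (by omega))⟩
  · simp only [Finset.disjoint_insert_right, Finset.disjoint_singleton_right,
      Finset.mem_powersetCard, Finset.insert_subset_iff, Finset.singleton_subset_iff, Finset.mem_Ico]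
    omega

theorem statement9 (m : ℕ) (hm : 2 ≤ m) :
    {T : Set ℕ | IsGrandchild T (({0} : Set ℕ) ∪ {n : ℕ | m ≤ n})}.ncard =
      m * (m - 1) / 2 + 3 := by
  have hgrand : {T | IsGrandchild T (ordinarySemigroup m)} =
      (fun s : Finset ℕ => ordinarySemigroup m \ ↑s) '' ↑(grandchildGaps m) := by
    ext T
    simp only [Set.mem_ofPred_eq, isGrandchild_ordinarySemigroup_iff hm, Set.mem_image,
      Finset.mem_coe, mem_grandchildGaps (by omega : 0 < m)]
    constructor
    · rintro ⟨a, b, ha, hab, hb, rfl⟩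
      exact ⟨{a, b}, ⟨a, b, ha, hab, hb, rfl⟩, by simp⟩
    · rintro ⟨_, ⟨a, b, ha, hab, hb, rfl⟩, rfl⟩
      exact ⟨a, b, ha, hab, hb, by simp⟩
  have hinj : Set.InjOn (fun s : Finset ℕ => ordinarySemigroup m \ ↑s) ↑(grandchildGaps m) := by
    intro s hs t ht hst
    have hsub : ∀ u ∈ grandchildGaps m, (u : Set ℕ) ⊆ ordinarySemigroup m :=
      fun u hu x hx => Or.inr (le_of_mem_grandchildGaps (by omega) hu x hx)
    rw [← Finset.coe_inj, ← Set.sdiff_sdiff_cancel_left (hsub s hs),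
      ← Set.sdiff_sdiff_cancel_left (hsub t ht)]
    exact congrArg _ hst
  change {T | IsGrandchild T (ordinarySemigroup m)}.ncard = _
  rw [hgrand, hinj.ncard_image, Set.ncard_coe_finset, card_grandchildGaps hm]
end
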